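/- Let φ(T,x,v) ∈ int O⁺_{≤T+S}(x) for some T,S > 0 and suppose the control system is locally accessible at φ(T,x,v). Then x ∈ int O⁻_{≤T+2S}(φ(T,x,v)). -/

import Mathlib

open MeasureTheory Set Topology

/-- A control-affine system `ẋ = f₀(x) + ∑ vᵢ(t) fᵢ(x)` on `ℝ^d` with Lipschitz
continuous vector fields and compact control range `V ⊆ ℝ^m`.  The (unique, global)
solutions are bundled as the data `φ` together with their defining properties. -/
structure CAS (d m : ℕ) where
  /-- the drift vector field -/
  f0 : (Fin d → ℝ) → (Fin d → ℝ)
  /-- the control vector fields -/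
  f : Fin m → (Fin d → ℝ) → (Fin d → ℝ)
  /-- the control range -/
  V : Set (Fin m → ℝ)
  lip0 : ∃ K, LipschitzWith K f0
  lip : ∀ i, ∃ K, LipschitzWith K (f i)
  V_compact : IsCompact V
  /-- the solution map: `φ x v t` is the solution at time `t` starting at `x` with control `v` -/
  φ : (Fin d → ℝ) → (ℝ → (Fin m → ℝ)) → ℝ → (Fin d → ℝ)
  φ_init : ∀ x v, φ x v 0 = x
  φ_cont : ∀ x v, Continuous (φ x v)
  /-- solutions are (Carathéodory) solutions of the ODE -/
  φ_sol : ∀ (x : Fin d → ℝ) (v : ℝ → (Fin m → ℝ)), Measurable v → (∀ t, v t ∈ V) →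
    ∀ t, 0 ≤ t →
      φ x v t = x + ∫ s in (0:ℝ)..t, (f0 (φ x v s) + ∑ i, v s i • f (i) (φ x v s))

namespace CAS

variable {d m : ℕ}

/-- the set of admissible controls -/
def ctrl (S : CAS d m) : Set (ℝ → (Fin m → ℝ)) :=
  {v | Measurable v ∧ ∀ t, v t ∈ S.V}

/-- a control is piecewise constant if it has only finitely many discontinuities on
every bounded interval, i.e. it is constant between the members of a sequence of
switching times tending to infinity -/
def PiecewiseConst (v : ℝ → (Fin m → ℝ)) : Prop :=
  ∃ τ : ℕ → ℝ, τ 0 = 0 ∧ StrictMono τ ∧ Filter.Tendsto τ Filter.atTop Filter.atTop ∧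
    ∀ n, ∀ t ∈ Ico (τ n) (τ (n + 1)), v t = v (τ n)

/-- the reachable set from `x` -/
def reach (S : CAS d m) (x : Fin d → ℝ) : Set (Fin d → ℝ) :=
  {y | ∃ v ∈ S.ctrl, ∃ t ≥ (0:ℝ), S.φ x v t = y}

/-- the set reachable from `x` with piecewise constant controls -/
def reachPC (S : CAS d m) (x : Fin d → ℝ) : Set (Fin d → ℝ) :=
  {y | ∃ v ∈ S.ctrl, PiecewiseConst v ∧ ∃ t ≥ (0:ℝ), S.φ x v t = y}

/-- the reachable set from `x` up to time `T` -/
def reachLe (S : CAS d m) (T : ℝ) (x : Fin d → ℝ) : Set (Fin d → ℝ) :=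
  {y | ∃ v ∈ S.ctrl, ∃ t ∈ Icc (0:ℝ) T, S.φ x v t = y}

/-- the controllable set to `x` up to time `T` -/
def contrLe (S : CAS d m) (T : ℝ) (x : Fin d → ℝ) : Set (Fin d → ℝ) :=
  {y | ∃ v ∈ S.ctrl, ∃ t ∈ Icc (0:ℝ) T, S.φ y v t = x}

/-- positive invariance of a set -/
def posInv (S : CAS d m) (M : Set (Fin d → ℝ)) : Prop :=
  ∀ x ∈ M, ∀ v ∈ S.ctrl, ∀ t ≥ (0:ℝ), S.φ x v t ∈ M

/-- invariance of a set -/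
def inv (S : CAS d m) (M : Set (Fin d → ℝ)) : Prop :=
  ∀ t ≥ (0:ℝ), {y | ∃ x ∈ M, ∃ v ∈ S.ctrl, S.φ x v t = y} = M

/-- the two defining properties (i) controlled invariance and (ii) approximate
reachability of a control set -/
def controlSetProps (S : CAS d m) (D : Set (Fin d → ℝ)) : Prop :=
  (∀ x ∈ D, ∃ v ∈ S.ctrl, ∀ t ≥ (0:ℝ), S.φ x v t ∈ D) ∧
  (∀ x ∈ D, D ⊆ closure (S.reach x))

/-- a control set: a maximal nonempty set with the properties `controlSetProps` -/
def isControlSet (S : CAS d m) (D : Set (Fin d → ℝ)) : Prop :=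
  D.Nonempty ∧ S.controlSetProps D ∧
  ∀ D', D ⊆ D' → S.controlSetProps D' → D' = D

/-- an invariant control set -/
def isInvControlSet (S : CAS d m) (C : Set (Fin d → ℝ)) : Prop :=
  S.isControlSet C ∧ ∀ x ∈ C, closure C = closure (S.reach x)

/-- local accessibility at a point -/
def locAccAt (S : CAS d m) (x : Fin d → ℝ) : Prop :=
  ∀ T > (0:ℝ), ∀ N ∈ 𝓝 x,
    (interior (S.reachLe T x) ∩ N).Nonempty ∧ (interior (S.contrLe T x) ∩ N).Nonempty

/-- local accessibility on a set -/
def locAccOn (S : CAS d m) (M : Set (Fin d → ℝ)) : Prop :=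
  ∀ x ∈ M, S.locAccAt x

/-- the domain of attraction of a set -/
def domAttr (S : CAS d m) (C : Set (Fin d → ℝ)) : Set (Fin d → ℝ) :=
  {x | (closure (S.reach x) ∩ C).Nonempty}

/-- the strict domain of attraction of an invariant control set -/
def domAttrStrict (S : CAS d m) (C : Set (Fin d → ℝ)) : Set (Fin d → ℝ) :=
  {x | (closure (S.reach x) ∩ C).Nonempty ∧
    ∀ C', S.isInvControlSet C' → (closure (S.reach x) ∩ C').Nonempty → C' = C}

end CAS

/-!
Local accessibility at `y = φ(T,x,v)` yields a point `z ∈ int O⁻_{≤S}(y)` so close to `y` that it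
also lies in `int O⁺_{≤T+S}(x)`, say `z = φ(t,x,u)` with `t ≤ T+S`. Since solutions depend
continuously on the initial value (Grönwall's inequality for the integral equation), the control
`u` steers every point of a neighbourhood of `x` into `int O⁻_{≤S}(y)` in time `t`, and from there
to `y` in time at most `S`.
-/

open scoped NNReal

theorem LipschitzWith.finsetSum {ι α E : Type*} [PseudoEMetricSpace α]
    [SeminormedAddCommGroup E] (s : Finset ι) {K : ι → ℝ≥0} {f : ι → α → E}
    (hf : ∀ i ∈ s, LipschitzWith (K i) (f i)) :
    LipschitzWith (∑ i ∈ s, K i) fun x => ∑ i ∈ s, f i x := by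
  induction s using Finset.cons_induction with
  | empty => simpa using LipschitzWith.const (0 : E)
  | cons i s hi ih =>
    simp only [Finset.sum_cons]
    exact (hf i (Finset.mem_cons_self i s)).add (ih fun j hj => hf j (Finset.mem_cons_of_mem hj))

theorem le_mul_exp_of_le_add_integral {D : ℝ → ℝ} {δ K a b : ℝ} (hD : Continuous D) (hK : 0 ≤ K)
    (h : ∀ r ∈ Icc a b, D r ≤ δ + ∫ s in a..r, K * D s) :
    ∀ r ∈ Icc a b, D r ≤ δ * Real.exp (K * (r - a)) := by
  -- `F` dominates `D` and `F' = K * D ≤ K * F`, so the differential Grönwall inequality applies.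
  set F : ℝ → ℝ := fun r => δ + ∫ s in a..r, K * D s
  have hF : ∀ r, HasDerivAt F (K * D r) r := fun r =>
    ((continuous_const.mul hD).integral_hasStrictDerivAt a r).hasDerivAt.const_add δ
  have hF_cont : Continuous F := continuous_iff_continuousAt.2 fun r => (hF r).continuousAt
  intro r hr
  refine (h r hr).trans ?_
  rw [← gronwallBound_ε0]
  refine le_gronwallBound_of_liminf_deriv_right_le hF_cont.continuousOn
    (fun x _ _ hq => (hF x).hasDerivWithinAt.liminf_right_slope_le hq) (by simp [F])
    (fun x hx => ?_) r hr
  simpa only [add_zero] using mul_le_mul_of_nonneg_left (h x (Ico_subset_Icc_self hx)) hK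

namespace CAS

variable {d m : ℕ} (S : CAS d m)

def field (p : Fin m → ℝ) (y : Fin d → ℝ) : Fin d → ℝ :=
  S.f0 y + ∑ i, p i • S.f i y

theorem continuous_field : Continuous (Function.uncurry S.field) := by
  have hf0 : Continuous S.f0 := S.lip0.choose_spec.continuous
  have hf : ∀ i, Continuous (S.f i) := fun i => (S.lip i).choose_spec.continuous
  unfold field
  fun_prop

theorem exists_lipschitzWith_field : ∃ K, ∀ p ∈ S.V, LipschitzWith K (S.field p) := by
  obtain ⟨C, hC⟩ := S.V_compact.isBounded.exists_norm_le
  obtain ⟨K₀, hK₀⟩ := S.lip0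
  choose K hK using S.lip
  refine ⟨K₀ + C.toNNReal * ∑ i, K i, fun p hp => ?_⟩
  have hsum : LipschitzWith (∑ i, ‖p i‖₊ * K i) fun y => ∑ i, p i • S.f i y :=
    LipschitzWith.finsetSum _ fun i _ => (lipschitzWith_smul (p i)).comp (hK i)
  refine (hK₀.add hsum).weaken (add_le_add_right ?_ _)
  rw [Finset.mul_sum]
  refine Finset.sum_le_sum fun i _ => mul_le_mul_of_nonneg_right ?_ (by positivity)
  rw [← NNReal.coe_le_coe, coe_nnnorm, Real.coe_toNNReal']
  exact ((norm_le_pi_norm p i).trans (hC p hp)).trans (le_max_left _ _)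

theorem intervalIntegrable_field {u : ℝ → Fin m → ℝ} (hu : u ∈ S.ctrl) {g : ℝ → Fin d → ℝ}
    (hg : Continuous g) (a b : ℝ) :
    IntervalIntegrable (fun s => S.field (u s) (g s)) volume a b := by
  have hK : IsCompact (S.V ×ˢ (g '' uIcc a b)) :=
    S.V_compact.prod (isCompact_uIcc.image hg)
  obtain ⟨M, hM⟩ := (hK.image S.continuous_field).isBounded.exists_norm_le
  rw [intervalIntegrable_iff]
  refine Measure.integrableOn_of_bounded measure_Ioc_lt_top.ne
    (S.continuous_field.measurable.comp (hu.1.prodMk hg.measurable)).aestronglyMeasurable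
    (ae_restrict_of_forall_mem measurableSet_uIoc fun s hs => hM _ ?_)
  exact ⟨(u s, g s), ⟨hu.2 s, s, uIoc_subset_uIcc hs, rfl⟩, rfl⟩

def Solves (u : ℝ → Fin m → ℝ) (g : ℝ → Fin d → ℝ) (b : ℝ) : Prop :=
  ∀ r ∈ Icc 0 b, g r = g 0 + ∫ s in 0..r, S.field (u s) (g s)

theorem solves_φ {u : ℝ → Fin m → ℝ} (hu : u ∈ S.ctrl) (x : Fin d → ℝ) (b : ℝ) :
    S.Solves u (S.φ x u) b := fun r hr => by
  rw [S.φ_init]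
  exact S.φ_sol x u hu.1 hu.2 r hr.1

variable {S} in
theorem Solves.congr_ctrl {u u' : ℝ → Fin m → ℝ} {g : ℝ → Fin d → ℝ} {b : ℝ}
    (hg : S.Solves u' g b) (huu' : EqOn u u' (Ioo 0 b)) : S.Solves u g b := by
  intro r hr
  rw [hg r hr, intervalIntegral.integral_of_le hr.1, intervalIntegral.integral_of_le hr.1,
    integral_Ioc_eq_integral_Ioo, integral_Ioc_eq_integral_Ioo]
  refine congrArg _ (setIntegral_congr_fun measurableSet_Ioo fun s hs => ?_)
  rw [huu' ⟨hs.1, hs.2.trans_le hr.2⟩]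

theorem norm_sub_le_of_solves {K : ℝ≥0} (hK : ∀ p ∈ S.V, LipschitzWith K (S.field p))
    {u : ℝ → Fin m → ℝ} (hu : u ∈ S.ctrl) {g h : ℝ → Fin d → ℝ} (hg : Continuous g)
    (hh : Continuous h) {b : ℝ} (hgs : S.Solves u g b) (hhs : S.Solves u h b) :
    ∀ r ∈ Icc 0 b, ‖g r - h r‖ ≤ ‖g 0 - h 0‖ * Real.exp (K * r) := by
  suffices hint : ∀ r ∈ Icc 0 b, ‖g r - h r‖ ≤ ‖g 0 - h 0‖ + ∫ s in 0..r, K * ‖g s - h s‖ by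
    intro r hr
    simpa using le_mul_exp_of_le_add_integral (D := fun r => ‖g r - h r‖) (hg.sub hh).norm K.2
      hint r hr
  intro r hr
  have hdiff : g r - h r =
      (g 0 - h 0) + ∫ s in 0..r, (S.field (u s) (g s) - S.field (u s) (h s)) := by
    rw [intervalIntegral.integral_sub (S.intervalIntegrable_field hu hg 0 r)
      (S.intervalIntegrable_field hu hh 0 r), hgs r hr, hhs r hr]
    abel
  rw [hdiff]
  refine (norm_add_le _ _).trans (add_le_add_right ?_ _)
  refine intervalIntegral.norm_integral_le_of_norm_le hr.1 (.of_forall fun s _ => ?_)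
    ((continuous_const.mul (hg.sub hh).norm).intervalIntegrable 0 r)
  rw [← dist_eq_norm, ← dist_eq_norm]
  exact (hK _ (hu.2 s)).dist_le_mul _ _

theorem eqOn_of_solves {u : ℝ → Fin m → ℝ} (hu : u ∈ S.ctrl) {g h : ℝ → Fin d → ℝ}
    (hg : Continuous g) (hh : Continuous h) {b : ℝ} (hgs : S.Solves u g b)
    (hhs : S.Solves u h b) (h0 : g 0 = h 0) : EqOn g h (Icc 0 b) := by
  obtain ⟨K, hK⟩ := S.exists_lipschitzWith_field
  intro r hr
  have := S.norm_sub_le_of_solves hK hu hg hh hgs hhs r hr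
  rwa [h0, sub_self, norm_zero, zero_mul, norm_le_zero_iff, sub_eq_zero] at this

theorem continuous_φ_initial {u : ℝ → Fin m → ℝ} (hu : u ∈ S.ctrl) {t : ℝ} (ht : 0 ≤ t) :
    Continuous fun w => S.φ w u t := by
  obtain ⟨L, hL⟩ := S.exists_lipschitzWith_field
  refine (LipschitzWith.of_dist_le' (K := Real.exp (L * t)) fun w w' => ?_).continuous
  rw [dist_eq_norm, dist_eq_norm, mul_comm]
  simpa [S.φ_init] using S.norm_sub_le_of_solves hL hu (S.φ_cont w u) (S.φ_cont w' u)
    (S.solves_φ hu w t) (S.solves_φ hu w' t) t ⟨ht, le_rfl⟩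

theorem φ_congr {u u' : ℝ → Fin m → ℝ} (hu : u ∈ S.ctrl) (hu' : u' ∈ S.ctrl) (x : Fin d → ℝ)
    {b : ℝ} (hb : 0 ≤ b) (huu' : EqOn u u' (Ioo 0 b)) : S.φ x u b = S.φ x u' b :=
  S.eqOn_of_solves hu (S.φ_cont x u) (S.φ_cont x u') (S.solves_φ hu x b)
    ((S.solves_φ hu' x b).congr_ctrl huu') (by rw [S.φ_init, S.φ_init]) ⟨hb, le_rfl⟩

theorem comp_const_add_mem_ctrl {u : ℝ → Fin m → ℝ} (hu : u ∈ S.ctrl) (t : ℝ) :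
    (fun ρ => u (t + ρ)) ∈ S.ctrl :=
  ⟨hu.1.comp (measurable_const_add t), fun ρ => hu.2 (t + ρ)⟩

theorem φ_add {u : ℝ → Fin m → ℝ} (hu : u ∈ S.ctrl) (x : Fin d → ℝ) {t r : ℝ} (ht : 0 ≤ t)
    (hr : 0 ≤ r) : S.φ x u (t + r) = S.φ (S.φ x u t) (fun ρ => u (t + ρ)) r := by
  have hshift : S.Solves (fun ρ => u (t + ρ)) (fun ρ => S.φ x u (t + ρ)) r := by
    intro ρ hρ
    have hadj := intervalIntegral.integral_add_adjacent_intervals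
      (S.intervalIntegrable_field hu (S.φ_cont x u) 0 t)
      (S.intervalIntegrable_field hu (S.φ_cont x u) t (t + ρ))
    show S.φ x u (t + ρ) = S.φ x u (t + 0) + ∫ s in 0..ρ, S.field (u (t + s)) (S.φ x u (t + s))
    rw [intervalIntegral.integral_comp_add_left (fun s => S.field (u s) (S.φ x u s)), add_zero,
      S.solves_φ hu x (t + ρ) (t + ρ) ⟨by linarith [hρ.1], le_rfl⟩,
      S.solves_φ hu x t t ⟨ht, le_rfl⟩, ← hadj, add_assoc]
  refine S.eqOn_of_solves (S.comp_const_add_mem_ctrl hu t)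
    ((S.φ_cont x u).comp (continuous_const_add t)) (S.φ_cont _ _) hshift
    (S.solves_φ (S.comp_const_add_mem_ctrl hu t) _ r) (by simp [S.φ_init]) ⟨hr, le_rfl⟩

noncomputable def concatCtrl (u u' : ℝ → Fin m → ℝ) (t : ℝ) : ℝ → Fin m → ℝ :=
  fun r => if r < t then u r else u' (r - t)

theorem concatCtrl_mem_ctrl {u u' : ℝ → Fin m → ℝ} (hu : u ∈ S.ctrl) (hu' : u' ∈ S.ctrl)
    (t : ℝ) : concatCtrl u u' t ∈ S.ctrl := by
  refine ⟨Measurable.ite measurableSet_Iio hu.1 (hu'.1.comp (measurable_sub_const t)),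
    fun r => ?_⟩
  unfold concatCtrl
  split_ifs
  exacts [hu.2 r, hu'.2 (r - t)]

theorem φ_concatCtrl {u u' : ℝ → Fin m → ℝ} (hu : u ∈ S.ctrl) (hu' : u' ∈ S.ctrl)
    (w : Fin d → ℝ) {t t' : ℝ} (ht : 0 ≤ t) (ht' : 0 ≤ t') :
    S.φ w (concatCtrl u u' t) (t + t') = S.φ (S.φ w u t) u' t' := by
  have hc := S.concatCtrl_mem_ctrl hu hu' t
  rw [S.φ_add hc w ht ht', S.φ_congr hc hu w ht fun r hr => if_pos hr.2]
  exact S.φ_congr (S.comp_const_add_mem_ctrl hc t) hu' _ ht' fun r hr => by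
    simp [concatCtrl, hr.1.le]

theorem mem_contrLe_add {u : ℝ → Fin m → ℝ} (hu : u ∈ S.ctrl) {t T s : ℝ} (ht : t ∈ Icc 0 T)
    {w y : Fin d → ℝ} (hw : S.φ w u t ∈ S.contrLe s y) : w ∈ S.contrLe (T + s) y := by
  obtain ⟨u', hu', t', ht', hy⟩ := hw
  exact ⟨concatCtrl u u' t, S.concatCtrl_mem_ctrl hu hu' t, t + t',
    ⟨add_nonneg ht.1 ht'.1, add_le_add ht.2 ht'.2⟩, (S.φ_concatCtrl hu hu' w ht.1 ht'.1).trans hy⟩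

end CAS

theorem stmt5_general {d m : ℕ} (S : CAS d m) (x : Fin d → ℝ) (v : ℝ → (Fin m → ℝ))
    (T s : ℝ) (hs : 0 < s)
    (hreach : S.φ x v T ∈ interior (S.reachLe (T + s) x))
    (hacc : S.locAccAt (S.φ x v T)) :
    x ∈ interior (S.contrLe (T + 2 * s) (S.φ x v T)) := by
  obtain ⟨z, hz_contr, hz_reach⟩ := (hacc s hs _ (isOpen_interior.mem_nhds hreach)).2
  obtain ⟨u, hu, t, ht, rfl⟩ := interior_subset hz_reach
  have hnhds : (fun w => S.φ w u t) ⁻¹' interior (S.contrLe s (S.φ x v T)) ∈ 𝓝 x :=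
    (S.continuous_φ_initial hu ht.1).continuousAt.preimage_mem_nhds
      (isOpen_interior.mem_nhds hz_contr)
  rw [mem_interior_iff_mem_nhds, two_mul, ← add_assoc]
  exact Filter.mem_of_superset hnhds fun w hw => S.mem_contrLe_add hu ht (interior_subset hw)

/-- If `φ(T,x,v) ∈ int 𝒪⁺_{≤T+S}(x)` for some `T, S > 0` and the
system is locally accessible at `φ(T,x,v)`, then `x ∈ int 𝒪⁻_{≤T+2S}(φ(T,x,v))`. -/
theorem stmt5 {d m : ℕ} (S : CAS d m) (x : Fin d → ℝ) (v : ℝ → (Fin m → ℝ))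
    (hv : v ∈ S.ctrl) (T s : ℝ) (hT : 0 < T) (hs : 0 < s)
    (hreach : S.φ x v T ∈ interior (S.reachLe (T + s) x))
    (hacc : S.locAccAt (S.φ x v T)) :
    x ∈ interior (S.contrLe (T + 2 * s) (S.φ x v T)) :=
  stmt5_general S x v T s hs hreach hacc
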